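/- For every n ≥ 1 and every P ∈ D_n^{h,≥}, the number of occurrences of the factor DUD in P equals the number of F steps in φ(P), minus the number of factors of the form UF^kD (k ≥ 1) in φ(P), minus 1 if φ(P) = F^n (minus 0 otherwise). -/

import Mathlib

inductive Step : Type
  | U | D | F
  deriving DecidableEq, Repr

open Step

/-- Number of occurrences of `p` as a factor (consecutive steps) of `w`. -/
def countFactor (p w : List Step) : ℕ :=
  w.tails.countP fun t => p.isPrefixOf t

/-- `w` is a Dyck path (word over {U,D} with as many U's as D's,
every prefix having at least as many U's as D's). -/
def IsDyck (w : List Step) : Prop :=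
  w.count F = 0 ∧ w.count U = w.count D ∧
    ∀ p : List Step, p <+: w → p.count D ≤ p.count U

/-- `w` is a Motzkin path. -/
def IsMotzkin (w : List Step) : Prop :=
  w.count U = w.count D ∧ ∀ p : List Step, p <+: w → p.count D ≤ p.count U

/-- The (maximal) height of a path. -/
def height (w : List Step) : ℕ :=
  (w.inits.map fun p => p.count U - p.count D).foldr max 0

/-- The set `D^{h,≥}` of Dyck paths with first return decomposition
`P = U α D β` satisfying `h(UαD) ≥ h(β)`, recursively. -/
inductive DH : List Step → Prop
  | nil : DH []
  | cons (α β : List Step) : DH α → DH β →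
      height (U :: (α ++ [D])) ≥ height β → DH (U :: (α ++ [D] ++ β))

/-- The map φ from `D^{h,≥}` to Motzkin paths, as a relation:
φ(ε)=ε, φ(αUD)=φ(α)F, φ(αUUβDγD)=φ(α)φ(γ)Uφ(β)D. -/
inductive Phi : List Step → List Step → Prop
  | nil : Phi [] []
  | flat (α a : List Step) : DH α → Phi α a →
      Phi (α ++ [U, D]) (a ++ [F])
  | up (α β γ a b c : List Step) : DH α → DH β → DH γ →
      Phi α a → Phi β b → Phi γ c →
      Phi (α ++ [U, U] ++ β ++ [D] ++ γ ++ [D]) (a ++ c ++ U :: (b ++ [D]))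

/-- Auxiliary: the list starts with one or more `F`'s followed by a `D`. -/
def fThenD : List Step → Bool
  | F :: D :: _ => true
  | F :: rest => fThenD rest
  | _ => false

/-- Auxiliary: the list starts with one or more `F`'s followed by a `U`. -/
def fThenU : List Step → Bool
  | F :: U :: _ => true
  | F :: rest => fThenU rest
  | _ => false

/-- Number of occurrences of factors of the form `U F^k D` with `k ≥ 1` in `w`. -/
def countUFD (w : List Step) : ℕ :=
  w.tails.countP fun t => match t with
    | U :: rest => fThenD rest
    | _ => false

/-- Number of occurrences of factors of the form `U F^k U` with `k ≥ 1` in `w`. -/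
def countUFU (w : List Step) : ℕ :=
  w.tails.countP fun t => match t with
    | U :: rest => fThenU rest
    | _ => false

/-!
Induction along the recursive definition of `φ`. For `φ(αUD) = φ(α)F` one `F` is added, and a
`DUD` is created at the junction unless `α = ε`, which is exactly when the correction term switches
on. For `φ(αUUβDγD) = φ(α)φ(γ)Uφ(β)D` all counts add up over the pieces except for one `DUD` at the
junction `D γ`, present iff `γ` starts with `UD`, and one factor `UF^kD`, present iff `φ(β) = F^k`
with `k ≥ 1`; since `φ(β)` and `φ(γ)` are Motzkin paths, no other `UF^kD` straddles a junction.
The height condition forces a path of `D^{h,≥}` starting with `UD` to be `(UD)^k`, whose image is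
`F^k`: so the extra `DUD` cancels the correction term of `γ`, and the correction term of `α`
vanishes, since `α = (UD)^k` with `k ≥ 1` would have a first return followed by `UU`.
-/

lemma countFactor_cons (p : List Step) (x : Step) (w : List Step) :
    countFactor p (x :: w) = countFactor p w + if p <+: x :: w then 1 else 0 := by
  simp [countFactor, List.countP_cons, List.isPrefixOf_iff_prefix]

lemma countFactor_singleton (x : Step) (w : List Step) : countFactor [x] w = w.count x := by
  induction w with
  | nil => rfl
  | cons y w ih =>
    rw [countFactor_cons, ih, List.count_cons]
    cases x <;> cases y <;> rfl

-- The middle letter of `DUD` is not `D`, so no occurrence has the separating `D` in its middle.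
lemma countFactor_DUD_append_D_cons (x y : List Step) :
    countFactor [D, U, D] (x ++ D :: y) =
      countFactor [D, U, D] (x ++ [D]) + countFactor [D, U, D] (D :: y) := by
  induction x with
  | nil => simp [countFactor]
  | cons a x ih =>
    rcases x with _ | ⟨b, _ | ⟨c, x⟩⟩ <;> simp_all [countFactor_cons] <;> omega

lemma countFactor_DUD_append {x : List Step} (hx : x = [] ∨ ∃ x', x = x' ++ [D]) (y : List Step) :
    countFactor [D, U, D] (x ++ y) =
      countFactor [D, U, D] x + countFactor [D, U, D] y +
        if x ≠ [] ∧ [U, D] <+: y then 1 else 0 := by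
  rcases hx with rfl | ⟨x, rfl⟩
  · simp [countFactor]
  · rw [List.append_assoc, List.singleton_append, countFactor_DUD_append_D_cons,
      countFactor_cons]
    simp only [List.cons_prefix_cons, true_and, ne_eq, List.append_eq_nil_iff, List.cons_ne_self,
      and_false, not_false_eq_true]
    omega

lemma fThenD_F_cons (w : List Step) : fThenD (F :: w) = (w.head? == some D || fThenD w) := by
  rcases w with _ | ⟨_ | _ | _, w⟩ <;> rfl

lemma fThenD_append_F (r : List Step) : fThenD (r ++ [F]) = fThenD r := by
  induction r with
  | nil => rfl
  | cons a r ih =>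
    cases a
    · rfl
    · rfl
    · rcases r with _ | ⟨b, r⟩
      · rfl
      · rw [List.cons_append, fThenD_F_cons, ih, fThenD_F_cons]
        rfl

lemma fThenD_append_of_exists_ne_F {r : List Step} (h : ∃ x ∈ r, x ≠ F) (y : List Step) :
    fThenD (r ++ y) = fThenD r := by
  induction r with
  | nil => simp at h
  | cons a r ih =>
    cases a
    · rfl
    · rfl
    · obtain ⟨x, hx, hxF⟩ := h
      have hr : ∃ x ∈ r, x ≠ F := ⟨x, by simp_all⟩
      have hne : r ≠ [] := by rintro rfl; simp at hr
      rw [List.cons_append, fThenD_F_cons, ih hr, List.head?_append_of_ne_nil _ hne,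
        fThenD_F_cons]

lemma fThenD_replicate_F (k : ℕ) : fThenD (List.replicate k F) = false := by
  induction k with
  | zero => rfl
  | succ k ih => rw [List.replicate_succ', fThenD_append_F, ih]

lemma fThenD_replicate_F_append_U (k : ℕ) (z : List Step) :
    fThenD (List.replicate k F ++ U :: z) = false := by
  induction k with
  | zero => rfl
  | succ k ih => cases k <;> simp_all [List.replicate_succ, fThenD_F_cons]

lemma fThenD_replicate_F_append_D (k : ℕ) (z : List Step) :
    fThenD (List.replicate (k + 1) F ++ D :: z) = true := by
  induction k with
  | zero => rfl
  | succ k ih => simp_all [List.replicate_succ, fThenD_F_cons]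

lemma isMotzkin_nil : IsMotzkin [] := ⟨rfl, by simp⟩

lemma isMotzkin_F_cons {w : List Step} : IsMotzkin (F :: w) ↔ IsMotzkin w := by
  simp only [IsMotzkin, List.prefix_cons_iff, List.count_cons]
  constructor
  · rintro ⟨hc, hp⟩
    exact ⟨by simpa using hc, fun p hpw => by simpa using hp (F :: p) (Or.inr ⟨p, rfl, hpw⟩)⟩
  · rintro ⟨hc, hp⟩
    refine ⟨by simpa using hc, ?_⟩
    rintro _ (rfl | ⟨p, rfl, hpw⟩)
    · simp
    · simpa using hp p hpw

lemma IsMotzkin.append {x y : List Step} (hx : IsMotzkin x) (hy : IsMotzkin y) :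
    IsMotzkin (x ++ y) := by
  refine ⟨by simp [List.count_append, hx.1, hy.1], fun p hp => ?_⟩
  obtain ⟨t, ht⟩ := hp
  rcases List.append_eq_append_iff.mp ht with ⟨a, rfl, -⟩ | ⟨c, rfl, hc⟩
  · exact hx.2 p ⟨a, rfl⟩
  · have := hy.2 c ⟨t, hc.symm⟩
    simp only [List.count_append, hx.1]
    omega

lemma IsMotzkin.arch {w : List Step} (hw : IsMotzkin w) : IsMotzkin (U :: (w ++ [D])) := by
  refine ⟨by simp [List.count_append, hw.1], ?_⟩
  intro p hp
  rcases List.prefix_cons_iff.mp hp with rfl | ⟨p, rfl, hpw⟩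
  · simp
  rcases List.prefix_concat_iff.mp hpw with rfl | hpw
  · simp [List.count_append, hw.1]
  · have := hw.2 p hpw
    simp only [List.count_cons_self, List.count_cons_of_ne (show U ≠ D by decide)]
    omega

lemma IsMotzkin.fThenD_eq_false {w : List Step} (hw : IsMotzkin w) : fThenD w = false := by
  induction w with
  | nil => rfl
  | cons a w ih =>
    cases a
    · rfl
    · rfl
    · rw [fThenD_F_cons, ih (isMotzkin_F_cons.mp hw)]
      rcases w with _ | ⟨_ | _ | _, w⟩
      · rfl
      · rfl
      · exact absurd (hw.2 [F, D] ⟨w, rfl⟩) (by simp)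
      · rfl

lemma IsMotzkin.not_suffix_U_replicate_F {w : List Step} (hw : IsMotzkin w) (k : ℕ) :
    ¬ U :: List.replicate k F <:+ w := by
  rintro ⟨t, rfl⟩
  have hcount : t.count U + 1 = t.count D := by
    simpa [List.count_append, List.count_replicate] using hw.1
  have := hw.2 t ⟨_, rfl⟩
  omega

lemma IsMotzkin.exists_replicate_F_append_U {w : List Step} (hw : IsMotzkin w) (z : List Step) :
    ∃ j z', w ++ U :: z = List.replicate j F ++ U :: z' := by
  induction w with
  | nil => exact ⟨0, z, rfl⟩
  | cons a w ih =>
    cases a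
    · exact ⟨0, w ++ U :: z, rfl⟩
    · exact absurd (hw.2 [D] ⟨w, rfl⟩) (by simp)
    · obtain ⟨j, z', h⟩ := ih (isMotzkin_F_cons.mp hw)
      exact ⟨j + 1, z', by rw [List.cons_append, h]; rfl⟩

lemma countUFD_cons_U (w : List Step) :
    countUFD (U :: w) = countUFD w + if fThenD w then 1 else 0 := by
  simp [countUFD, List.countP_cons]

lemma countUFD_cons_of_ne_U {x : Step} (hx : x ≠ U) (w : List Step) :
    countUFD (x :: w) = countUFD w := by
  cases x <;> simp_all [countUFD]

lemma countUFD_append {x y : List Step}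
    (h : ∀ r, U :: r <:+ x → fThenD (r ++ y) = fThenD r) :
    countUFD (x ++ y) = countUFD x + countUFD y := by
  induction x with
  | nil => exact (Nat.zero_add _).symm
  | cons a x ih =>
    have ih := ih fun r hr => h r (hr.trans (List.suffix_cons a x))
    by_cases ha : a = U
    · subst ha
      rw [List.cons_append, countUFD_cons_U, countUFD_cons_U, ih, h x List.suffix_rfl]
      omega
    · rw [List.cons_append, countUFD_cons_of_ne_U ha, countUFD_cons_of_ne_U ha, ih]

lemma countUFD_append_F (w : List Step) : countUFD (w ++ [F]) = countUFD w :=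
  countUFD_append fun r _ => fThenD_append_F r

lemma countUFD_append_of_eq_replicate_F_append_U (x : List Step) {y z : List Step} {j : ℕ}
    (hy : y = List.replicate j F ++ U :: z) :
    countUFD (x ++ y) = countUFD x + countUFD y := by
  refine countUFD_append fun r _ => ?_
  by_cases hr : ∃ x ∈ r, x ≠ F
  · exact fThenD_append_of_exists_ne_F hr _
  · push Not at hr
    rw [hy, List.eq_replicate_iff.mpr ⟨rfl, hr⟩, ← List.append_assoc, ← List.replicate_add,
      fThenD_replicate_F_append_U, fThenD_replicate_F]

lemma IsMotzkin.countUFD_append_D {w : List Step} (hw : IsMotzkin w) :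
    countUFD (w ++ [D]) = countUFD w := by
  have hr : ∀ r, U :: r <:+ w → ∃ x ∈ r, x ≠ F := fun r hr => by
    by_contra! hF
    exact hw.not_suffix_U_replicate_F _ (List.eq_replicate_iff.mpr ⟨rfl, hF⟩ ▸ hr)
  exact countUFD_append fun r hsuf => fThenD_append_of_exists_ne_F (hr r hsuf) _

lemma IsMotzkin.fThenD_append_D_iff {w : List Step} (hw : IsMotzkin w) :
    fThenD (w ++ [D]) = true ↔ w ≠ [] ∧ ∀ x ∈ w, x = F := by
  by_cases hF : ∀ x ∈ w, x = F
  · rw [List.eq_replicate_iff.mpr ⟨rfl, hF⟩]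
    rcases w.length with _ | k
    · simp [fThenD]
    · simp [fThenD_replicate_F_append_D]
  · push Not at hF
    simp [fThenD_append_of_exists_ne_F hF, hw.fThenD_eq_false, hF]

lemma countUFD_up {a b c : List Step} (hb : IsMotzkin b) (hc : IsMotzkin c) :
    countUFD (a ++ c ++ U :: (b ++ [D])) =
      countUFD a + countUFD c + countUFD b + if b ≠ [] ∧ ∀ x ∈ b, x = F then 1 else 0 := by
  obtain ⟨j, z, hjz⟩ := hc.exists_replicate_F_append_U (b ++ [D])
  rw [List.append_assoc, countUFD_append_of_eq_replicate_F_append_U a hjz,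
    countUFD_append_of_eq_replicate_F_append_U c (y := U :: _) (j := 0) rfl, countUFD_cons_U,
    hb.countUFD_append_D]
  simp only [← hb.fThenD_append_D_iff]
  omega

def zigzag : ℕ → List Step
  | 0 => []
  | k + 1 => U :: D :: zigzag k

lemma zigzag_succ' (k : ℕ) : zigzag (k + 1) = zigzag k ++ [U, D] := by
  induction k with
  | zero => rfl
  | succ k ih => exact congrArg (U :: D :: ·) ih

@[simp] lemma length_zigzag (k : ℕ) : (zigzag k).length = 2 * k := by
  induction k with
  | zero => rfl
  | succ k ih => simp only [zigzag, List.length_cons, ih]; omega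

lemma not_UU_infix_zigzag (k : ℕ) : ¬ [U, U] <:+: zigzag k := by
  induction k with
  | zero => simp [zigzag]
  | succ k ih => simpa [zigzag, List.infix_cons_iff] using ih

lemma height_le_iff {w : List Step} {n : ℕ} :
    height w ≤ n ↔ ∀ p, p <+: w → p.count U - p.count D ≤ n := by
  refine ⟨fun h p hp => le_trans ?_ h, fun h => List.max_le_of_forall_le _ _ ?_⟩
  · exact List.le_max_of_le (List.mem_map_of_mem ((List.mem_inits _ _).mpr hp)) le_rfl
  · simp only [List.mem_map, List.mem_inits]
    rintro _ ⟨p, hp, rfl⟩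
    exact h p hp

lemma DH.eq_nil_or_eq_cons_U {P : List Step} (h : DH P) : P = [] ∨ ∃ t, P = U :: t := by
  cases h with
  | nil => exact Or.inl rfl
  | cons α β _ _ _ => exact Or.inr ⟨_, rfl⟩

lemma DH.eq_nil_or_eq_append_D {P : List Step} (h : DH P) : P = [] ∨ ∃ Q, P = Q ++ [D] := by
  induction h with
  | nil => exact Or.inl rfl
  | cons α β _ _ _ _ ihβ =>
    rcases ihβ with rfl | ⟨Q, rfl⟩
    · exact Or.inr ⟨U :: α, by simp⟩
    · exact Or.inr ⟨U :: (α ++ [D] ++ Q), by simp⟩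

lemma DH.eq_zigzag_of_height_le_one {P : List Step} (h : DH P) (hh : height P ≤ 1) :
    ∃ k, P = zigzag k := by
  induction h with
  | nil => exact ⟨0, rfl⟩
  | cons α β hα _ _ _ ihβ =>
    rcases hα.eq_nil_or_eq_cons_U with rfl | ⟨t, rfl⟩
    · obtain ⟨k, rfl⟩ := ihβ <| height_le_iff.mpr fun p hp => by
        simpa using height_le_iff.mp hh (U :: D :: p) (by simpa using hp)
      exact ⟨k + 1, rfl⟩
    · exact absurd (height_le_iff.mp hh [U, U] (by simp)) (by simp)

lemma DH.eq_zigzag_of_cons_UD {t : List Step} (h : DH (U :: D :: t)) : ∃ k, t = zigzag k := by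
  generalize hP : U :: D :: t = P at h
  cases h with
  | nil => cases hP
  | cons α β hα hβ hle =>
    rcases hα.eq_nil_or_eq_cons_U with rfl | ⟨s, rfl⟩
    · obtain rfl : t = β := by simpa using hP
      exact hβ.eq_zigzag_of_height_le_one (le_trans hle (by decide))
    · simp at hP

lemma DH.UD_prefix_append_D_iff {γ : List Step} (h : DH γ) :
    [U, D] <+: γ ++ [D] ↔ [U, D] <+: γ := by
  rw [List.prefix_concat_iff, or_iff_right]
  rintro hγ
  obtain rfl : γ = [U] := List.append_cancel_right (hγ.symm : γ ++ [D] = [U] ++ [D])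
  rcases h.eq_nil_or_eq_append_D with h | ⟨Q, h⟩
  · simp at h
  · simpa using congrArg List.getLast? h

lemma DH.countFactor_DUD_up {α β γ : List Step} (hα : DH α) (hβ : DH β) (hγ : DH γ) :
    countFactor [D, U, D] (α ++ [U, U] ++ β ++ [D] ++ γ ++ [D]) =
      countFactor [D, U, D] α + countFactor [D, U, D] β + countFactor [D, U, D] γ +
        if [U, D] <+: γ then 1 else 0 := by
  have hshape : α ++ [U, U] ++ β ++ [D] ++ γ ++ [D] = α ++ U :: U :: (β ++ D :: (γ ++ [D])) := by
    simp
  rw [hshape, countFactor_DUD_append hα.eq_nil_or_eq_append_D, countFactor_cons,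
    countFactor_cons, countFactor_DUD_append hβ.eq_nil_or_eq_append_D, countFactor_cons,
    countFactor_DUD_append hγ.eq_nil_or_eq_append_D]
  have hD : countFactor [D, U, D] [D] = 0 := rfl
  simp only [hD, hγ.UD_prefix_append_D_iff, List.cons_prefix_cons, reduceCtorEq, false_and,
    and_false, true_and, ↓reduceIte, add_zero]
  omega

lemma Phi.length_eq {P m : List Step} (h : Phi P m) : P.length = 2 * m.length := by
  induction h with
  | nil => rfl
  | flat _ _ _ _ ih => simp only [List.length_append, List.length_cons, List.length_nil, ih]; omega
  | up _ _ _ _ _ _ _ _ _ _ _ _ ihα ihβ ihγ =>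
    simp only [List.length_append, List.length_cons, List.length_nil, ihα, ihβ, ihγ]; omega

lemma Phi.isMotzkin {P m : List Step} (h : Phi P m) : IsMotzkin m := by
  induction h with
  | nil => exact isMotzkin_nil
  | flat _ _ _ _ ih => exact ih.append (isMotzkin_F_cons.mpr isMotzkin_nil)
  | up _ _ _ _ _ _ _ _ _ _ _ _ ihα ihβ ihγ => exact (ihα.append ihγ).append ihβ.arch

lemma Phi.forall_eq_F_iff {P m : List Step} (h : Phi P m) :
    (∀ x ∈ m, x = F) ↔ P = zigzag m.length := by
  induction h with
  | nil => simp [zigzag]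
  | flat α a _ _ ih =>
    rw [List.forall_mem_append, ih, List.length_append, List.length_singleton, zigzag_succ']
    simp
  | up α β γ =>
    refine iff_of_false (fun hF => by simpa using hF U (by simp)) fun hP => ?_
    apply not_UU_infix_zigzag
    rw [← hP]
    exact ⟨α, β ++ [D] ++ γ ++ [D], by simp⟩

lemma Phi.UD_prefix_iff {γ c : List Step} (hγ : DH γ) (h : Phi γ c) :
    [U, D] <+: γ ↔ c ≠ [] ∧ ∀ x ∈ c, x = F := by
  rw [h.forall_eq_F_iff]
  constructor
  · rintro ⟨t, rfl⟩
    obtain ⟨k, rfl⟩ := hγ.eq_zigzag_of_cons_UD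
    have hlen : c.length = k + 1 := by
      have := h.length_eq
      simp only [List.cons_append, List.nil_append, List.length_cons, length_zigzag] at this
      omega
    exact ⟨List.ne_nil_of_length_eq_add_one hlen, by rw [hlen]; rfl⟩
  · rintro ⟨hc, hγc⟩
    obtain ⟨k, hk⟩ := Nat.exists_eq_succ_of_ne_zero (List.length_pos_iff.mpr hc).ne'
    rw [hγc, hk]
    exact ⟨zigzag k, rfl⟩

lemma Phi.not_flat_of_DH_up {α β γ a : List Step} (h : Phi α a)
    (hP : DH (α ++ [U, U] ++ β ++ [D] ++ γ ++ [D])) : ¬ (a ≠ [] ∧ ∀ x ∈ a, x = F) := by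
  rintro ⟨ha, hF⟩
  obtain ⟨k, hk⟩ := Nat.exists_eq_succ_of_ne_zero (List.length_pos_iff.mpr ha).ne'
  rw [h.forall_eq_F_iff, hk] at hF
  subst hF
  obtain ⟨k', hk'⟩ := DH.eq_zigzag_of_cons_UD (t := zigzag k ++ [U, U] ++ β ++ [D] ++ γ ++ [D])
    (by simpa [zigzag] using hP)
  apply not_UU_infix_zigzag k'
  rw [← hk']
  exact ⟨zigzag k, β ++ [D] ++ γ ++ [D], by simp⟩

lemma Phi.countFactor_DUD_add_countUFD {P m : List Step} (h : Phi P m) (hP : DH P) :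
    countFactor [D, U, D] P + countUFD m + (if m ≠ [] ∧ ∀ x ∈ m, x = F then 1 else 0) =
      m.count F := by
  induction h with
  | nil => rfl
  | flat α a hα hφ ih =>
    have hlen := hφ.length_eq
    by_cases ha : a = []
    · obtain rfl : α = [] := List.eq_nil_of_length_eq_zero (by simpa [ha] using hlen)
      subst ha
      rfl
    have hα0 : α ≠ [] := by rintro rfl; simp [eq_comm, ha] at hlen
    have hflat : (a ++ [F] ≠ [] ∧ ∀ x ∈ a ++ [F], x = F) ↔ (a ≠ [] ∧ ∀ x ∈ a, x = F) := by
      simp only [ne_eq, List.append_eq_nil_iff, ha, false_and, not_false_eq_true, true_and,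
        List.forall_mem_append, List.forall_mem_singleton, and_true]
    have hUD : countFactor [D, U, D] [U, D] = 0 := rfl
    specialize ih hα
    rw [countFactor_DUD_append hα.eq_nil_or_eq_append_D, countUFD_append_F,
      if_pos ⟨hα0, List.prefix_rfl⟩, List.count_append, List.count_singleton_self, hUD]
    simp only [hflat]
    split_ifs at * <;> omega
  | up α β γ a b c hα hβ hγ hφα hφβ hφγ ihα ihβ ihγ =>
    specialize ihα hα
    specialize ihβ hβ
    specialize ihγ hγ
    rw [if_neg (hφα.not_flat_of_DH_up hP)] at ihα
    have hm_flat : ¬ (a ++ c ++ U :: (b ++ [D]) ≠ [] ∧ ∀ x ∈ a ++ c ++ U :: (b ++ [D]), x = F) :=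
      fun h => by simpa using h.2 U (by simp)
    have hF : (a ++ c ++ U :: (b ++ [D])).count F = a.count F + c.count F + b.count F := by
      simp [List.count_append, Nat.add_assoc]
    rw [DH.countFactor_DUD_up hα hβ hγ, countUFD_up hφβ.isMotzkin hφγ.isMotzkin, if_neg hm_flat,
      hF]
    simp only [hφγ.UD_prefix_iff hγ]
    split_ifs at * <;> omega

/-- φ transports DUD: #DUD(P) = #F(φP) - #UF⁺D(φP) - [φP = Fⁿ], for n ≥ 1. -/
theorem stmt15 (n : ℕ) (hn : 1 ≤ n) (P m : List Step) (hP : DH P) (hlen : P.length = 2 * n)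
    (hphi : Phi P m) :
    countFactor [Step.D, Step.U, Step.D] P + countUFD m +
      (if m = List.replicate n Step.F then 1 else 0) = countFactor [Step.F] m := by
  have hm : m.length = n := by have := hphi.length_eq; omega
  have hflat : m = List.replicate n F ↔ m ≠ [] ∧ ∀ x ∈ m, x = F := by
    rw [List.eq_replicate_iff, ← List.length_pos_iff, hm]
    simp [show 0 < n by omega]
  simp only [hflat, countFactor_singleton]
  exact hphi.countFactor_DUD_add_countUFD hP
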